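/- For a single-qubit density matrix ρ = (I + r·σ)/2 with Bloch vector r ∈ ℝ³, and an orthonormal basis {|n+⟩, |n−⟩} of ℂ² corresponding to a unit vector n̂ ∈ ℝ³ on the Bloch sphere, the squared l₁-norm of coherence satisfies 4|⟨n−|ρ|n+⟩|² = |r × n̂|², the squared Euclidean norm of the cross product of r and n̂. -/

import Mathlib

/-!
With `n̂, θ̂, φ̂` the orthonormal spherical frame at `(α, β)`, the basis vectors satisfy
`⟨n−|n+⟩ = 0` and `⟨n−|σₖ|n+⟩ = -e^{iβ} (θ̂ₖ + i φ̂ₖ)`. Hence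
`2 ⟨n−|ρ|n+⟩ = -e^{iβ} (r·θ̂ + i r·φ̂)`, whose squared modulus is `(r·θ̂)² + (r·φ̂)²`.
Expanding `r` in the frame and using Lagrange's identity, this is `|r|² - (r·n̂)² = |r × n̂|²`.
-/

open Matrix Complex

noncomputable def pauli1 : Matrix (Fin 2) (Fin 2) ℂ := !![0, 1; 1, 0]
noncomputable def pauli2 : Matrix (Fin 2) (Fin 2) ℂ := !![0, -I; I, 0]
noncomputable def pauli3 : Matrix (Fin 2) (Fin 2) ℂ := !![1, 0; 0, -1]

theorem crossProduct_dotProduct_self_of_dotProduct_self_eq_one {R : Type*} [CommRing R]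
    (r : Fin 3 → R) {n : Fin 3 → R} (hn : n ⬝ᵥ n = 1) :
    (r ⨯₃ n) ⬝ᵥ (r ⨯₃ n) = r ⬝ᵥ r - (r ⬝ᵥ n) ^ 2 := by
  rw [cross_dot_cross, hn, dotProduct_comm n r]
  ring

theorem Real.cos_eq_cos_half_sq_sub_sin_half_sq (x : ℝ) :
    Real.cos x = Real.cos (x / 2) ^ 2 - Real.sin (x / 2) ^ 2 := by
  rw [← Real.cos_two_mul', mul_div_cancel₀ x two_ne_zero]

theorem Real.sin_eq_two_mul_sin_half_mul_cos_half (x : ℝ) :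
    Real.sin x = 2 * Real.sin (x / 2) * Real.cos (x / 2) := by
  rw [← Real.sin_two_mul, mul_div_cancel₀ x two_ne_zero]

section SphericalFrame

variable (α β : ℝ)

noncomputable def radialUnit : Fin 3 → ℝ :=
  ![Real.sin α * Real.cos β, Real.sin α * Real.sin β, Real.cos α]

noncomputable def polarUnit : Fin 3 → ℝ :=
  ![Real.cos α * Real.cos β, Real.cos α * Real.sin β, -Real.sin α]

noncomputable def azimuthalUnit : Fin 3 → ℝ :=
  ![-Real.sin β, Real.cos β, 0]

theorem radialUnit_dotProduct_self : radialUnit α β ⬝ᵥ radialUnit α β = 1 := by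
  simp only [radialUnit, dotProduct, Fin.sum_univ_three, cons_val_zero, cons_val_one, cons_val_two,
    head_cons, tail_cons]
  linear_combination Real.sin α ^ 2 * Real.sin_sq_add_cos_sq β + Real.sin_sq_add_cos_sq α

theorem dotProduct_self_eq_sq_add_sq_add_sq (r : Fin 3 → ℝ) :
    r ⬝ᵥ r = (r ⬝ᵥ radialUnit α β) ^ 2 + (r ⬝ᵥ polarUnit α β) ^ 2
      + (r ⬝ᵥ azimuthalUnit β) ^ 2 := by
  simp only [radialUnit, polarUnit, azimuthalUnit, dotProduct, Fin.sum_univ_three, cons_val_zero,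
    cons_val_one, cons_val_two, head_cons, tail_cons]
  linear_combination
    -((r 0 * Real.cos β + r 1 * Real.sin β) ^ 2 + r 2 ^ 2) * Real.sin_sq_add_cos_sq α
      - (r 0 ^ 2 + r 1 ^ 2) * Real.sin_sq_add_cos_sq β

theorem crossProduct_radialUnit_dotProduct_self (r : Fin 3 → ℝ) :
    (r ⨯₃ radialUnit α β) ⬝ᵥ (r ⨯₃ radialUnit α β)
      = (r ⬝ᵥ polarUnit α β) ^ 2 + (r ⬝ᵥ azimuthalUnit β) ^ 2 := by
  rw [crossProduct_dotProduct_self_of_dotProduct_self_eq_one r (radialUnit_dotProduct_self α β),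
    dotProduct_self_eq_sq_add_sq_add_sq α β]
  ring

end SphericalFrame

section Qubit

variable (α β : ℝ)

noncomputable def blochState (r : Fin 3 → ℝ) : Matrix (Fin 2) (Fin 2) ℂ :=
  (1/2 : ℂ) • (1 + (r 0 : ℂ) • pauli1 + (r 1 : ℂ) • pauli2 + (r 2 : ℂ) • pauli3)

noncomputable def ketPlus : Fin 2 → ℂ :=
  ![(Real.cos (α / 2) : ℂ), exp (β * I) * (Real.sin (α / 2) : ℂ)]

noncomputable def ketMinus : Fin 2 → ℂ :=
  ![exp (-(β * I)) * (Real.sin (α / 2) : ℂ), -(Real.cos (α / 2) : ℂ)]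

theorem star_ketMinus :
    star (ketMinus α β) = ![exp (β * I) * (Real.sin (α / 2) : ℂ), -(Real.cos (α / 2) : ℂ)] := by
  ext i
  fin_cases i <;> simp [ketMinus, ← exp_conj, -ofReal_sin, -ofReal_cos, conj_ofReal]

theorem star_ketMinus_dotProduct_ketPlus : star (ketMinus α β) ⬝ᵥ ketPlus α β = 0 := by
  rw [star_ketMinus]
  simp only [ketPlus, dotProduct, Fin.sum_univ_two, cons_val_zero, cons_val_one]
  ring

/- In the next two proofs the coefficients reduce the difference of the two sides modulo
`I ^ 2 = -1` and the Pythagorean identities at `α / 2` and at `β`. -/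
theorem star_ketMinus_dotProduct_pauli1_mulVec_ketPlus :
    star (ketMinus α β) ⬝ᵥ pauli1 *ᵥ ketPlus α β
      = -exp (β * I) * (polarUnit α β 0 + azimuthalUnit β 0 * I) := by
  rw [star_ketMinus]
  simp only [ketPlus, pauli1, polarUnit, azimuthalUnit, dotProduct, mulVec, Fin.sum_univ_two,
    cons_val_zero, cons_val_one, of_apply, cons_val', empty_val', cons_val_fin_one]
  rw [exp_mul_I, ← ofReal_cos, ← ofReal_sin, Real.cos_eq_cos_half_sq_sub_sin_half_sq α]
  push_cast
  linear_combination
    (cos (β : ℂ) * sin (β : ℂ) * I - sin (β : ℂ) ^ 2) * sin_sq_add_cos_sq ((α : ℂ) / 2)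
      + cos ((α : ℂ) / 2) ^ 2 * sin_sq_add_cos_sq (β : ℂ)
      + sin (β : ℂ) ^ 2 * (sin ((α : ℂ) / 2) ^ 2 - 1) * I_sq

theorem star_ketMinus_dotProduct_pauli2_mulVec_ketPlus :
    star (ketMinus α β) ⬝ᵥ pauli2 *ᵥ ketPlus α β
      = -exp (β * I) * (polarUnit α β 1 + azimuthalUnit β 1 * I) := by
  rw [star_ketMinus]
  simp only [ketPlus, pauli2, polarUnit, azimuthalUnit, dotProduct, mulVec, Fin.sum_univ_two,
    cons_val_zero, cons_val_one, of_apply, cons_val', empty_val', cons_val_fin_one]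
  rw [exp_mul_I, ← ofReal_cos, ← ofReal_sin, Real.cos_eq_cos_half_sq_sub_sin_half_sq α]
  push_cast
  linear_combination
    (cos (β : ℂ) * sin (β : ℂ) - I * cos (β : ℂ) ^ 2) * sin_sq_add_cos_sq ((α : ℂ) / 2)
      + I * cos ((α : ℂ) / 2) ^ 2 * sin_sq_add_cos_sq (β : ℂ)
      + (cos (β : ℂ) * sin (β : ℂ) * (1 - 2 * sin ((α : ℂ) / 2) ^ 2)
          - sin (β : ℂ) ^ 2 * sin ((α : ℂ) / 2) ^ 2 * I) * I_sq

theorem star_ketMinus_dotProduct_pauli3_mulVec_ketPlus :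
    star (ketMinus α β) ⬝ᵥ pauli3 *ᵥ ketPlus α β
      = -exp (β * I) * (polarUnit α β 2 + azimuthalUnit β 2 * I) := by
  rw [star_ketMinus]
  simp only [ketPlus, pauli3, polarUnit, azimuthalUnit, dotProduct, mulVec, Fin.sum_univ_two,
    cons_val_zero, cons_val_one, cons_val_two, of_apply, cons_val', empty_val', cons_val_fin_one,
    head_cons, tail_cons]
  rw [Real.sin_eq_two_mul_sin_half_mul_cos_half α]
  push_cast
  ring

theorem star_ketMinus_dotProduct_blochState_mulVec_ketPlus (r : Fin 3 → ℝ) :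
    star (ketMinus α β) ⬝ᵥ blochState r *ᵥ ketPlus α β
      = -(exp (β * I) / 2) * ((r ⬝ᵥ polarUnit α β : ℝ) + (r ⬝ᵥ azimuthalUnit β : ℝ) * I) := by
  simp only [blochState, smul_mulVec, add_mulVec, one_mulVec, dotProduct_smul, dotProduct_add,
    star_ketMinus_dotProduct_ketPlus, star_ketMinus_dotProduct_pauli1_mulVec_ketPlus,
    star_ketMinus_dotProduct_pauli2_mulVec_ketPlus, star_ketMinus_dotProduct_pauli3_mulVec_ketPlus]
  simp only [dotProduct, Fin.sum_univ_three, smul_eq_mul]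
  push_cast
  ring

end Qubit

theorem four_mul_norm_half_exp_mul_I_mul_sq (β x y : ℝ) :
    4 * ‖-(exp (β * I) / 2) * (x + y * I)‖ ^ 2 = x ^ 2 + y ^ 2 := by
  rw [norm_mul, norm_neg, norm_div, norm_exp_ofReal_mul_I, mul_pow, Complex.sq_norm,
    normSq_add_mul_I]
  norm_num
  ring

theorem stmt0 (r : Fin 3 → ℝ) (α β : ℝ)
    (ρ : Matrix (Fin 2) (Fin 2) ℂ)
    (hρ : ρ = (1/2 : ℂ) • (1 + (r 0 : ℂ) • pauli1 + (r 1 : ℂ) • pauli2 + (r 2 : ℂ) • pauli3))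
    (nhat : Fin 3 → ℝ)
    (hn : nhat = ![Real.sin α * Real.cos β, Real.sin α * Real.sin β, Real.cos α])
    (nplus nminus : Fin 2 → ℂ)
    (hplus : nplus = ![(Real.cos (α/2) : ℂ), Complex.exp (β * I) * (Real.sin (α/2) : ℂ)])
    (hminus : nminus = ![Complex.exp (-(β * I)) * (Real.sin (α/2) : ℂ), -(Real.cos (α/2) : ℂ)]) :
    4 * (‖(fun i => star (nminus i)) ⬝ᵥ ρ.mulVec nplus‖)^2
      = (crossProduct r nhat) ⬝ᵥ (crossProduct r nhat) := by
  subst hρ hn hplus hminus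
  change 4 * ‖star (ketMinus α β) ⬝ᵥ blochState r *ᵥ ketPlus α β‖ ^ 2
    = (r ⨯₃ radialUnit α β) ⬝ᵥ (r ⨯₃ radialUnit α β)
  rw [star_ketMinus_dotProduct_blochState_mulVec_ketPlus, four_mul_norm_half_exp_mul_I_mul_sq,
    crossProduct_radialUnit_dotProduct_self]
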